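/- arXiv:1911.01849 — 4 statements merged into one kernel-verified Lean document; each statement's English description precedes it below -/
import Mathlib

section
/- The twisted adjoint representation restricted to the pin group, Ad~ : Pin(r,s) → O(r,s), is a surjective group homomorphism with kernel {1, -1}; i.e., it is a double covering. -/
/-!
A vector `v` with `Q v = ±1` acts under `Ad~` as the reflection in the hyperplane orthogonal to
`v`, so `Ad~` maps `Pin(r,s)` to isometries, and it is multiplicative by construction.
Surjectivity is the Cartan–Dieudonné theorem, after rescaling each reflection vector to
`Q v = ±1`. For the kernel, `Ad~_u = id` says `α(u) v = v u` for all vectors `v`; as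
`v x - α(x) v` is the contraction of `x` by `polar Q v`, every contraction of `u` by a
coordinate functional vanishes, and expanding `u` in the monomials
`e_{i₁} ⋯ e_{iₖ}` (`i₁ < ⋯ < iₖ`) shows that `u` is a scalar `t`, and `reverse(u) u = ±1`
forces `t = ±1`.
-/

noncomputable section

/-- The standard bilinear form of signature `(r,s)` on `ℝ^{r+s}` (the polarization of
`Q_{r,s}`). -/
def Brs (r s : ℕ) (x y : Fin (r + s) → ℝ) : ℝ :=
  ∑ i : Fin (r + s), (if (i : ℕ) < r then (1 : ℝ) else -1) * x i * y i

/-- The quadratic form generating the Clifford algebra `Cl_{r,s}` with the paper's convention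
`z ⊗ z + ⟨z,z⟩_{r,s} = 0`, i.e. `ι z * ι z = -⟨z,z⟩_{r,s} • 1`. -/
def Qrs (r s : ℕ) : QuadraticForm ℝ (Fin (r + s) → ℝ) :=
  QuadraticMap.weightedSumSquares ℝ (fun i : Fin (r + s) => if (i : ℕ) < r then (-1 : ℝ) else 1)
/-- `φ ∈ Pin(r,s)` iff `φ` is a product of vectors of scalar square `±1`. -/
def IsPin (r s : ℕ) (φ : CliffordAlgebra (Qrs r s)) : Prop :=
  ∃ l : List (Fin (r + s) → ℝ),
    (∀ v ∈ l, Brs r s v v = 1 ∨ Brs r s v v = -1) ∧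
    φ = (l.map (CliffordAlgebra.ι (Qrs r s))).prod

open QuadraticMap

lemma QuadraticMap.map_sub_eq_add_sub_polar {R M N : Type*} [CommRing R] [AddCommGroup M]
    [Module R M] [AddCommGroup N] [Module R N] (Q : QuadraticMap R M N) (x y : M) :
    Q (x - y) = Q x + Q y - polar Q x y := by
  have h := polar_neg_right Q x y
  rw [polar, ← sub_eq_add_neg, QuadraticMap.map_neg] at h
  rw [← neg_neg (polar Q x y), ← h]
  abel

namespace QuadraticForm

variable {K V : Type*} [Field K] [AddCommGroup V] [Module K V] (Q : QuadraticForm K V)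

/-- This is the identity when `Q v = 0`, since then `(Q v)⁻¹ = 0`. -/
def reflection (v : V) : Module.End K V :=
  LinearMap.id - ((Q v)⁻¹ • polarBilin Q v).smulRight v

lemma reflection_apply (v x : V) : Q.reflection v x = x - ((Q v)⁻¹ * polar Q v x) • v := by
  simp [reflection]

lemma reflection_apply_self {v : V} (hv : Q v ≠ 0) : Q.reflection v v = -v := by
  rw [reflection_apply, polar_self, nsmul_eq_mul, Nat.cast_ofNat, mul_left_comm,
    inv_mul_cancel₀ hv, mul_one, two_smul]
  abel

lemma reflection_apply_of_polar_eq_zero {v x : V} (h : polar Q v x = 0) :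
    Q.reflection v x = x := by
  simp [reflection_apply, h]

lemma reflection_reflection_apply (v x : V) : Q.reflection v (Q.reflection v x) = x := by
  rcases eq_or_ne (Q v) 0 with hv | hv
  · simp [reflection_apply, hv]
  rw [reflection_apply, reflection_apply, polar_sub_right, polar_smul_right, polar_self,
    sub_sub, ← add_smul, smul_eq_mul, nsmul_eq_mul, Nat.cast_ofNat]
  field_simp
  ring_nf
  simp

lemma apply_reflection (v x : V) : Q (Q.reflection v x) = Q x := by
  rcases eq_or_ne (Q v) 0 with hv | hv
  · simp [reflection_apply, hv]
  rw [reflection_apply, map_sub_eq_add_sub_polar, QuadraticMap.map_smul, polar_smul_right,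
    polar_comm Q x v]
  simp only [smul_eq_mul]
  field_simp
  ring

lemma reflection_smul {c : K} (hc : c ≠ 0) (v : V) : Q.reflection (c • v) = Q.reflection v := by
  ext x
  simp only [reflection_apply, QuadraticMap.map_smul, polar_smul_left, smul_eq_mul, smul_smul]
  rcases eq_or_ne (Q v) 0 with hv | hv
  · simp [hv]
  congr 1
  field_simp

lemma reflection_mem {W : Submodule K V} {v x : V} (hv : v ∈ W) (hx : x ∈ W) :
    Q.reflection v x ∈ W := by
  rw [reflection_apply]
  exact W.sub_mem hx (W.smul_mem _ hv)

lemma reflection_sub_apply {x y : V} (h : Q x = Q y) (hxy : Q (x - y) ≠ 0) :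
    Q.reflection (x - y) x = y := by
  have : polar Q (x - y) x = Q (x - y) := by
    rw [polar_sub_left, polar_self, map_sub_eq_add_sub_polar, polar_comm, h]; ring_nf
  rw [reflection_apply, this, inv_mul_cancel₀ hxy, one_smul, sub_sub_cancel]

lemma apply_list_prod_reflection (l : List V) (x : V) :
    Q ((l.map Q.reflection).prod x) = Q x := by
  induction l with
  | nil => rfl
  | cons v t ih => simp [Module.End.mul_apply, apply_reflection, ih]

lemma list_prod_reflection_apply_of_polar_eq_zero {l : List V} {x : V}
    (h : ∀ v ∈ l, polar Q v x = 0) : (l.map Q.reflection).prod x = x := by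
  induction l with
  | nil => rfl
  | cons v t ih =>
    simp only [List.map_cons, List.prod_cons, Module.End.mul_apply, List.forall_mem_cons] at h ⊢
    rw [ih h.2, reflection_apply_of_polar_eq_zero Q h.1]

lemma list_prod_reflection_mem {W : Submodule K V} {l : List V} (hl : ∀ v ∈ l, v ∈ W) {x : V}
    (hx : x ∈ W) : (l.map Q.reflection).prod x ∈ W := by
  induction l with
  | nil => exact hx
  | cons v t ih =>
    simp only [List.map_cons, List.prod_cons, Module.End.mul_apply, List.forall_mem_cons] at hl ⊢
    exact reflection_mem Q hl.1 (ih hl.2)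

lemma list_prod_reflection_reverse_apply (l : List V) (x : V) :
    (l.map Q.reflection).reverse.prod ((l.map Q.reflection).prod x) = x := by
  induction l generalizing x with
  | nil => rfl
  | cons v t ih =>
    simp [Module.End.mul_apply, reflection_reflection_apply, ih]

/-- Reflect in `x - y` if it is anisotropic; otherwise `x + y` is, and reflecting in `x + y`
and then in `y` works. -/
lemma exists_list_prod_reflection_apply_eq [NeZero (2 : K)] {W : Submodule K V} {x y : V}
    (hx : x ∈ W) (hy : y ∈ W) (hxy : Q x = Q y) (hx0 : Q x ≠ 0) :
    ∃ l : List V, (∀ u ∈ l, u ∈ W ∧ Q u ≠ 0) ∧ (l.map Q.reflection).prod x = y := by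
  by_cases hsub : Q (x - y) = 0
  · have hadd : Q (x + y) ≠ 0 := by
      intro hadd
      rw [← sub_neg_eq_add, map_sub_eq_add_sub_polar, QuadraticMap.map_neg,
        polar_neg_right] at hadd
      rw [map_sub_eq_add_sub_polar] at hsub
      have h4 : (2 : K) * (2 * Q x) = 0 := by linear_combination hadd + hsub + 2 * hxy
      simp only [mul_eq_zero, two_ne_zero, hx0, or_self] at h4
    have hrefl : Q.reflection (x + y) x = -y := by
      rw [← sub_neg_eq_add]
      exact reflection_sub_apply Q (hxy.trans (Q.map_neg y).symm) (by rwa [sub_neg_eq_add])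
    refine ⟨[y, x + y], ?_, ?_⟩
    · simp only [List.mem_cons, List.not_mem_nil, or_false, forall_eq_or_imp, forall_eq]
      exact ⟨⟨hy, hxy ▸ hx0⟩, W.add_mem hx hy, hadd⟩
    · simp [Module.End.mul_apply, hrefl, reflection_apply_self Q (hxy ▸ hx0)]
  · exact ⟨[x - y], by simp [W.sub_mem hx hy, hsub], by simp [reflection_sub_apply Q hxy hsub]⟩

lemma exists_mem_ne_zero_of_separatingLeft {W : Submodule K V}
    (hW : (LinearMap.BilinForm.restrict (polarBilin Q) W).SeparatingLeft) (hW0 : W ≠ ⊥) :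
    ∃ v ∈ W, Q v ≠ 0 := by
  by_contra! h
  obtain ⟨x, hxW, hx0⟩ := W.ne_bot_iff.1 hW0
  refine hx0 (congrArg Subtype.val (hW ⟨x, hxW⟩ fun ⟨y, hyW⟩ => ?_))
  simp [polar, h x hxW, h y hyW, h _ (W.add_mem hxW hyW)]

section Orthogonal

variable [NeZero (2 : K)] {W : Submodule K V} {v : V} (hv : Q v ≠ 0)
include hv

lemma sub_smul_mem_inf_ker {x : V} (hvW : v ∈ W) (hx : x ∈ W) :
    x - ((2 * Q v)⁻¹ * polar Q v x) • v ∈ W ⊓ LinearMap.ker (polarBilin Q v) := by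
  refine ⟨W.sub_mem hx (W.smul_mem _ hvW), ?_⟩
  simp only [SetLike.mem_coe, LinearMap.mem_ker, polarBilin_apply_apply, polar_sub_right,
    polar_smul_right, polar_self, smul_eq_mul, nsmul_eq_mul, Nat.cast_ofNat]
  field_simp
  ring

lemma separatingLeft_restrict_inf_ker (hvW : v ∈ W)
    (hW : (LinearMap.BilinForm.restrict (polarBilin Q) W).SeparatingLeft) :
    (LinearMap.BilinForm.restrict (polarBilin Q)
      (W ⊓ LinearMap.ker (polarBilin Q v))).SeparatingLeft := by
  rintro ⟨x, hxW, hxv⟩ hx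
  simp only [LinearMap.BilinForm.restrict_apply, Subtype.forall] at hx
  have hxv : polar Q x v = 0 := by simpa [polar_comm] using hxv
  have key := hW ⟨x, hxW⟩ fun ⟨y, hyW⟩ => by
    have := hx _ (Q.sub_smul_mem_inf_ker hv hvW hyW)
    simpa [polar_sub_right, polar_smul_right, hxv] using this
  exact Subtype.ext (congrArg Subtype.val key :)

lemma finrank_inf_ker_lt [FiniteDimensional K V] (hvW : v ∈ W) :
    Module.finrank K ↥(W ⊓ LinearMap.ker (polarBilin Q v)) < Module.finrank K W := by
  refine Submodule.finrank_lt_finrank_of_lt (lt_of_le_of_ne inf_le_left fun h => ?_)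
  have : v ∈ LinearMap.ker (polarBilin Q v) := (h.ge hvW).2
  simp [polar_self, hv, two_ne_zero] at this

end Orthogonal

lemma polar_apply_apply_of_forall_mem {W : Submodule K V} {C : Module.End K V}
    (hC : ∀ x ∈ W, Q (C x) = Q x) {x y : V} (hx : x ∈ W) (hy : y ∈ W) :
    polar Q (C x) (C y) = polar Q x y := by
  simp only [polar, ← map_add, hC x hx, hC y hy, hC _ (W.add_mem hx hy)]

/-- **Cartan–Dieudonné**, by induction on `finrank W`: composing `C` with at most two
reflections makes it fix an anisotropic `v ∈ W`, and then it preserves the orthogonal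
complement of `v` in `W`. -/
theorem exists_list_prod_reflection_eqOn [NeZero (2 : K)] [FiniteDimensional K V]
    (W : Submodule K V) (hW : (LinearMap.BilinForm.restrict (polarBilin Q) W).SeparatingLeft)
    (C : Module.End K V) (hCW : ∀ x ∈ W, C x ∈ W) (hC : ∀ x ∈ W, Q (C x) = Q x) :
    ∃ l : List V, (∀ v ∈ l, v ∈ W ∧ Q v ≠ 0) ∧ ∀ x ∈ W, C x = (l.map Q.reflection).prod x := by
  induction hn : Module.finrank K W using Nat.strong_induction_on generalizing W C with
  | _ n ih =>
  rcases eq_or_ne W ⊥ with rfl | hW0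
  · exact ⟨[], by simp, fun x hx => by simp [(Submodule.mem_bot K).1 hx]⟩
  obtain ⟨v, hvW, hv⟩ := Q.exists_mem_ne_zero_of_separatingLeft hW hW0
  obtain ⟨l₁, hl₁, hCv⟩ :=
    Q.exists_list_prod_reflection_apply_eq hvW (hCW v hvW) (hC v hvW).symm hv
  set D := (l₁.map Q.reflection).reverse.prod * C with hD
  have hDv : D v = v := by
    rw [hD, Module.End.mul_apply, ← hCv, list_prod_reflection_reverse_apply]
  have hDW : ∀ x ∈ W, D x ∈ W := fun x hx => by
    rw [hD, Module.End.mul_apply, ← List.map_reverse]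
    exact Q.list_prod_reflection_mem (fun u hu => (hl₁ u (List.mem_reverse.1 hu)).1) (hCW x hx)
  have hDQ : ∀ x ∈ W, Q (D x) = Q x := fun x hx => by
    rw [hD, Module.End.mul_apply, ← List.map_reverse, apply_list_prod_reflection, hC x hx]
  have hDW' : ∀ x ∈ W ⊓ LinearMap.ker (polarBilin Q v),
      D x ∈ W ⊓ LinearMap.ker (polarBilin Q v) :=
    fun x ⟨hxW, hxv⟩ => ⟨hDW x hxW, by
      rw [SetLike.mem_coe, LinearMap.mem_ker, polarBilin_apply_apply] at hxv ⊢
      rw [← Q.polar_apply_apply_of_forall_mem hDQ hvW hxW, hDv] at hxv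
      exact hxv⟩
  obtain ⟨l₂, hl₂, hDl₂⟩ := ih _ (hn ▸ Q.finrank_inf_ker_lt hv hvW) _
    (Q.separatingLeft_restrict_inf_ker hv hvW hW) D hDW' (fun x hx => hDQ x hx.1) rfl
  have hl₂v : (l₂.map Q.reflection).prod v = v :=
    Q.list_prod_reflection_apply_of_polar_eq_zero fun u hu => by
      simpa [polar_comm] using (hl₂ u hu).1.2
  refine ⟨l₁ ++ l₂, fun u hu => ?_, fun x hx => ?_⟩
  · rcases List.mem_append.1 hu with hu | hu
    exacts [hl₁ u hu, ⟨(hl₂ u hu).1.1, (hl₂ u hu).2⟩]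
  have hDx : D x = (l₂.map Q.reflection).prod x := by
    set a := (2 * Q v)⁻¹ * polar Q v x
    have hx' := Q.sub_smul_mem_inf_ker hv hvW hx
    rw [← add_sub_cancel (a • v) x, map_add, map_add, map_smul, map_smul, hDv, hl₂v,
      hDl₂ _ hx']
  rw [List.map_append, List.prod_append, Module.End.mul_apply, ← hDx, hD, Module.End.mul_apply]
  simpa using (Q.list_prod_reflection_reverse_apply l₁.reverse (C x)).symm

theorem exists_list_prod_reflection_eq [NeZero (2 : K)] [FiniteDimensional K V]
    (hQ : (polarBilin Q).SeparatingLeft) (C : Module.End K V) (hC : ∀ x, Q (C x) = Q x) :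
    ∃ l : List V, (∀ v ∈ l, Q v ≠ 0) ∧ C = (l.map Q.reflection).prod := by
  obtain ⟨l, hl, hCl⟩ := Q.exists_list_prod_reflection_eqOn ⊤
    (fun x hx => Subtype.ext (hQ x fun y => hx ⟨y, trivial⟩)) C (fun _ _ => trivial)
    (fun x _ => hC x)
  exact ⟨l, fun v hv => (hl v hv).2, LinearMap.ext fun x => hCl x trivial⟩

section Real

variable {E : Type*} [AddCommGroup E] [Module ℝ E] {Q : QuadraticForm ℝ E}

lemma exists_smul_apply_eq_one_or_neg_one {v : E} (hv : Q v ≠ 0) :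
    ∃ c : ℝ, c ≠ 0 ∧ (Q (c • v) = 1 ∨ Q (c • v) = -1) := by
  have hpos : 0 < √|Q v| := Real.sqrt_pos.2 (abs_pos.2 hv)
  refine ⟨(√|Q v|)⁻¹, inv_ne_zero hpos.ne', ?_⟩
  rw [QuadraticMap.map_smul, smul_eq_mul, ← mul_inv, Real.mul_self_sqrt (abs_nonneg _)]
  rcases abs_choice (Q v) with h | h
  · left; rw [h, inv_mul_cancel₀ hv]
  · right; rw [h, inv_neg, neg_mul, inv_mul_cancel₀ hv]

lemma exists_list_map_reflection_eq {l : List E} (hl : ∀ v ∈ l, Q v ≠ 0) :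
    ∃ l' : List E, (∀ v ∈ l', Q v = 1 ∨ Q v = -1) ∧ l'.map Q.reflection = l.map Q.reflection := by
  induction l with
  | nil => exact ⟨[], by simp, rfl⟩
  | cons v t ih =>
    rw [List.forall_mem_cons] at hl
    obtain ⟨c, hc, hcv⟩ := exists_smul_apply_eq_one_or_neg_one hl.1
    obtain ⟨t', ht', ht'_eq⟩ := ih hl.2
    exact ⟨c • v :: t', List.forall_mem_cons.2 ⟨hcv, ht'⟩, by simp [reflection_smul Q hc, ht'_eq]⟩

theorem exists_list_prod_unit_reflection_eq [FiniteDimensional ℝ E]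
    (hQ : (polarBilin Q).SeparatingLeft) (C : Module.End ℝ E) (hC : ∀ x, Q (C x) = Q x) :
    ∃ l : List E, (∀ v ∈ l, Q v = 1 ∨ Q v = -1) ∧ C = (l.map Q.reflection).prod := by
  obtain ⟨l, hl, rfl⟩ := Q.exists_list_prod_reflection_eq hQ C hC
  obtain ⟨l', hl', hl'l⟩ := exists_list_map_reflection_eq hl
  exact ⟨l', hl', by rw [hl'l]⟩

end Real

end QuadraticForm

lemma List.prod_eq_one_or_neg_one {R : Type*} [Ring R] {l : List R}
    (hl : ∀ x ∈ l, x = 1 ∨ x = -1) : l.prod = 1 ∨ l.prod = -1 := by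
  induction l with
  | nil => simp
  | cons x t ih =>
    rw [List.forall_mem_cons] at hl
    rcases hl.1 with rfl | rfl <;> rcases ih hl.2 with h | h <;> simp [h]

namespace CliffordAlgebra

section CommRing

variable {R M : Type*} [CommRing R] [AddCommGroup M] [Module R M] {Q : QuadraticForm R M}

lemma ι_mul_sub_involute_mul_ι (v : M) (x : CliffordAlgebra Q) :
    ι Q v * x - involute x * ι Q v = contractLeft (polarBilin Q v) x := by
  induction x using CliffordAlgebra.left_induction with
  | algebraMap r => rw [involute.commutes, contractLeft_algebraMap, Algebra.commutes, sub_self]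
  | add x y hx hy => rw [map_add, map_add, ← hx, ← hy]; noncomm_ring
  | ι_mul x m hx =>
    rw [contractLeft_ι_mul, ← hx, map_mul, involute_ι, polarBilin_apply_apply, Algebra.smul_def,
      ← ι_mul_ι_add_swap]
    noncomm_ring

lemma reverse_list_prod_ι_mul (l : List M) :
    reverse (l.map (ι Q)).prod * (l.map (ι Q)).prod = algebraMap R _ (l.map Q).prod := by
  induction l with
  | nil => simp
  | cons v t ih =>
    rw [List.map_cons, List.prod_cons, reverse.map_mul, reverse_ι, List.map_cons, List.prod_cons,
      map_mul, ← ih, mul_assoc, ← mul_assoc (ι Q v), ι_sq_scalar, Algebra.left_comm]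

end CommRing

variable {K V : Type*} [Field K] [AddCommGroup V] [Module K V] {Q : QuadraticForm K V}

def twistedConj (u : (CliffordAlgebra Q)ˣ) (x : CliffordAlgebra Q) : CliffordAlgebra Q :=
  involute (u : CliffordAlgebra Q) * x * ↑u⁻¹

lemma twistedConj_mul (u u' : (CliffordAlgebra Q)ˣ) (x : CliffordAlgebra Q) :
    twistedConj (u * u') x = twistedConj u (twistedConj u' x) := by
  simp only [twistedConj, Units.val_mul, map_mul, mul_inv_rev]
  noncomm_ring

lemma twistedConj_ι_of_coe_eq_ι {u : (CliffordAlgebra Q)ˣ} {v : V} (hv : Q v ≠ 0)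
    (hu : (u : CliffordAlgebra Q) = ι Q v) (w : V) :
    twistedConj u (ι Q w) = ι Q (Q.reflection v w) := by
  let := invertibleOfNonzero hv
  let := invertibleιOfInvertible Q v
  have hinv : (↑u⁻¹ : CliffordAlgebra Q) = ⅟(ι Q v) :=
    Units.inv_eq_of_mul_eq_one_right (by rw [hu, mul_invOf_self])
  rw [twistedConj, hinv, hu, involute_ι, neg_mul, neg_mul, ι_mul_ι_mul_invOf_ι, ← map_neg,
    QuadraticForm.reflection_apply, invOf_eq_inv, neg_sub]

lemma isUnit_list_prod_ι {l : List V} (hl : ∀ v ∈ l, Q v ≠ 0) : IsUnit (l.map (ι Q)).prod :=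
  List.prod_isUnit fun _ hm => by
    obtain ⟨v, hv, rfl⟩ := List.mem_map.1 hm
    exact isUnit_ι_of_isUnit Q (hl v hv).isUnit

lemma twistedConj_ι_of_coe_eq_list_prod {l : List V} (hl : ∀ v ∈ l, Q v ≠ 0)
    {u : (CliffordAlgebra Q)ˣ} (hu : (u : CliffordAlgebra Q) = (l.map (ι Q)).prod) (w : V) :
    twistedConj u (ι Q w) = ι Q ((l.map Q.reflection).prod w) := by
  induction l generalizing u with
  | nil =>
    obtain rfl : u = 1 := Units.ext hu
    simp [twistedConj]
  | cons v t ih =>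
    rw [List.forall_mem_cons] at hl
    set a := (isUnit_ι_of_isUnit Q hl.1.isUnit).unit
    have ha : (a : CliffordAlgebra Q) = ι Q v := rfl
    have hrest : ((a⁻¹ * u : (CliffordAlgebra Q)ˣ) : CliffordAlgebra Q) = (t.map (ι Q)).prod := by
      rw [Units.val_mul, hu, List.map_cons, List.prod_cons, ← ha, ← mul_assoc, Units.inv_mul,
        one_mul]
    rw [← mul_inv_cancel_left a u, twistedConj_mul, ih hl.2 hrest,
      twistedConj_ι_of_coe_eq_ι hl.1 ha, List.map_cons, List.prod_cons, Module.End.mul_apply]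

/-- The first entry of the list acts first. -/
def contractLeftList {R n : Type*} [CommRing R] {Q : QuadraticForm R (n → R)} :
    List n → Module.End R (CliffordAlgebra Q)
  | [] => 1
  | i :: t => contractLeftList t * contractLeft (LinearMap.proj i)

section Diagonal

variable {K n : Type*} [Field K] [Fintype n] (w : n → K)

lemma polar_weightedSumSquares_single [DecidableEq n] (i : n) (x : n → K) :
    polar (weightedSumSquares K w) (Pi.single i 1) x = 2 * w i * x i := by
  simp only [polar, weightedSumSquares_apply, smul_eq_mul, ← Finset.sum_sub_distrib]
  rw [Finset.sum_eq_single i]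
  · simp; ring
  · intro j _ hj; simp [hj]
  · simp

lemma separatingLeft_polarBilin_weightedSumSquares [DecidableEq n] [NeZero (2 : K)]
    (hw : ∀ i, w i ≠ 0) :
    (polarBilin (weightedSumSquares K w)).SeparatingLeft := by
  intro x hx
  ext i
  have := hx (Pi.single i 1)
  rw [polarBilin_apply_apply, polar_comm, polar_weightedSumSquares_single] at this
  simpa [two_ne_zero, hw i] using this

variable [LinearOrder n]

def basisMonomial (l : List n) : CliffordAlgebra (weightedSumSquares K w) :=
  (l.map fun i => ι _ (Pi.single i 1)).prod

@[simp] lemma basisMonomial_nil : basisMonomial w [] = 1 := rfl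

lemma basisMonomial_cons (i : n) (l : List n) :
    basisMonomial w (i :: l) = ι _ (Pi.single i 1) * basisMonomial w l := rfl

lemma ι_single_mul_ι_single_of_ne {i j : n} (h : i ≠ j) :
    ι (weightedSumSquares K w) (Pi.single i 1) * ι _ (Pi.single j 1) =
      -(ι _ (Pi.single j 1) * ι _ (Pi.single i 1)) := by
  rw [ι_mul_ι_comm, polar_weightedSumSquares_single, Pi.single_eq_of_ne h]
  simp

lemma ι_single_mul_basisMonomial {l : List n} (hl : l.Pairwise (· < ·)) (i : n) :
    ∃ (a : K) (m : List n), m.Pairwise (· < ·) ∧ (∀ j ∈ m, j = i ∨ j ∈ l) ∧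
      ι _ (Pi.single i 1) * basisMonomial w l = a • basisMonomial w m := by
  induction l with
  | nil => exact ⟨1, [i], List.pairwise_singleton _ i, by simp, by simp [basisMonomial_cons]⟩
  | cons j t ih =>
    obtain ⟨hjt, ht⟩ := List.pairwise_cons.1 hl
    rcases lt_trichotomy i j with hij | rfl | hij
    · refine ⟨1, i :: j :: t, ?_, by simp, by simp only [one_smul, basisMonomial_cons]⟩
      exact List.pairwise_cons.2 ⟨fun b hb => by
        rcases List.mem_cons.1 hb with rfl | hb
        exacts [hij, hij.trans (hjt b hb)], hl⟩
    · refine ⟨weightedSumSquares K w (Pi.single i 1), t, ht, by simp_all, ?_⟩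
      rw [basisMonomial_cons, ← mul_assoc, ι_sq_scalar, Algebra.smul_def]
    · obtain ⟨a, m, hm, hmem, hmul⟩ := ih ht
      refine ⟨-a, j :: m, List.pairwise_cons.2 ⟨fun b hb => ?_, hm⟩, fun b hb => ?_, ?_⟩
      · rcases hmem b hb with rfl | hb
        exacts [hij, hjt b hb]
      · rcases List.mem_cons.1 hb with rfl | hb
        · simp
        · rcases hmem b hb with rfl | hb <;> simp_all
      · rw [basisMonomial_cons, ← mul_assoc, ι_single_mul_ι_single_of_ne w hij.ne', neg_mul,
          mul_assoc, hmul, basisMonomial_cons, mul_smul_comm, neg_smul]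

lemma mem_span_basisMonomial (x : CliffordAlgebra (weightedSumSquares K w)) :
    x ∈ Submodule.span K
      (Set.range fun l : {l : List n // l.Pairwise (· < ·)} => basisMonomial w l) := by
  induction x using CliffordAlgebra.left_induction with
  | algebraMap r =>
    rw [Algebra.algebraMap_eq_smul_one]
    exact Submodule.smul_mem _ _ (Submodule.subset_span ⟨⟨[], List.Pairwise.nil⟩, rfl⟩)
  | add x y hx hy => exact Submodule.add_mem _ hx hy
  | ι_mul x v hx =>
    rw [pi_eq_sum_univ' v, map_sum, Finset.sum_mul]
    refine Submodule.sum_mem _ fun i _ => ?_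
    rw [map_smul, smul_mul_assoc]
    refine Submodule.smul_mem _ _ ?_
    induction hx using Submodule.span_induction with
    | mem y hy =>
      obtain ⟨⟨l, hl⟩, rfl⟩ := hy
      obtain ⟨a, m, hm, -, hmul⟩ := ι_single_mul_basisMonomial w hl i
      rw [hmul]
      exact Submodule.smul_mem _ _ (Submodule.subset_span ⟨⟨m, hm⟩, rfl⟩)
    | zero => rw [mul_zero]; exact Submodule.zero_mem _
    | add y z _ _ hy hz => rw [mul_add]; exact Submodule.add_mem _ hy hz
    | smul c y _ hy => rw [mul_smul_comm]; exact Submodule.smul_mem _ _ hy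

lemma contractLeft_proj_basisMonomial_of_notMem {l : List n} {i : n} (hi : i ∉ l) :
    contractLeft (LinearMap.proj i) (basisMonomial w l) = 0 := by
  induction l with
  | nil => exact contractLeft_one _ _
  | cons j t ih =>
    rw [List.mem_cons, not_or] at hi
    rw [basisMonomial_cons, contractLeft_ι_mul, ih hi.2]
    simp [Pi.single_eq_of_ne hi.1]

lemma contractLeft_proj_basisMonomial_of_mem {l : List n} (hl : l.Nodup) {i : n} (hi : i ∈ l) :
    ∃ a : K, a ≠ 0 ∧
      contractLeft (LinearMap.proj i) (basisMonomial w l) = a • basisMonomial w (l.erase i) := by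
  induction l with
  | nil => simp at hi
  | cons j t ih =>
    obtain ⟨hjt, ht⟩ := List.nodup_cons.1 hl
    rw [basisMonomial_cons, contractLeft_ι_mul]
    rcases eq_or_ne i j with rfl | hij
    · refine ⟨1, one_ne_zero, ?_⟩
      simp [contractLeft_proj_basisMonomial_of_notMem w hjt]
    · obtain ⟨a, ha, hae⟩ := ih ht ((List.mem_cons.1 hi).resolve_left hij)
      refine ⟨-a, neg_ne_zero.2 ha, ?_⟩
      rw [hae, List.erase_cons_tail (by simpa using hij.symm), basisMonomial_cons]
      simp [Pi.single_eq_of_ne hij]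

lemma contractLeftList_basisMonomial_of_ne {m l : List n} (hm : m.Pairwise (· < ·))
    (hl : l.Pairwise (· < ·)) (hlen : l.length ≤ m.length) (hne : l ≠ m) :
    contractLeftList m (basisMonomial w l) = 0 := by
  induction m generalizing l with
  | nil => exact absurd (List.eq_nil_of_length_eq_zero (Nat.le_zero.1 hlen)) hne
  | cons i t ih =>
    rw [contractLeftList, Module.End.mul_apply]
    by_cases hil : i ∈ l
    · obtain ⟨a, -, hae⟩ := contractLeft_proj_basisMonomial_of_mem w hl.nodup hil
      have hne' : l.erase i ≠ t := fun h =>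
        hne (((h ▸ List.perm_cons_erase hil).eq_of_pairwise' hl hm))
      rw [hae, map_smul, ih (List.pairwise_cons.1 hm).2 (hl.sublist (l.erase_sublist))
        (by rw [List.length_erase_of_mem hil]; simp at hlen; omega) hne', smul_zero]
    · rw [contractLeft_proj_basisMonomial_of_notMem w hil, map_zero]

lemma contractLeftList_basisMonomial_self {m : List n} (hm : m.Nodup) :
    ∃ a : K, a ≠ 0 ∧ contractLeftList m (basisMonomial w m) = algebraMap K _ a := by
  induction m with
  | nil => exact ⟨1, one_ne_zero, by simp [contractLeftList]⟩
  | cons i t ih =>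
    obtain ⟨a₁, ha₁, hae⟩ :=
      contractLeft_proj_basisMonomial_of_mem w hm List.mem_cons_self
    obtain ⟨a₂, ha₂, hbe⟩ := ih (List.nodup_cons.1 hm).2
    refine ⟨a₁ * a₂, mul_ne_zero ha₁ ha₂, ?_⟩
    rw [contractLeftList, Module.End.mul_apply, hae, List.erase_cons_head, map_smul, hbe,
      Algebra.smul_def, ← map_mul]

theorem exists_eq_algebraMap_of_contractLeft_proj_eq_zero [NeZero (2 : K)]
    {x : CliffordAlgebra (weightedSumSquares K w)}
    (hx : ∀ i, contractLeft (LinearMap.proj i) x = 0) : ∃ t : K, x = algebraMap K _ t := by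
  let _ : Invertible (2 : K) := invertibleOfNonzero two_ne_zero
  obtain ⟨c, rfl⟩ := Finsupp.mem_span_range_iff_exists_finsupp.1 (mem_span_basisMonomial w x)
  suffices hc : ∀ l ∈ c.support, l.val = [] by
    refine ⟨c.sum fun _ a => a, ?_⟩
    rw [Finsupp.sum, Finsupp.sum, map_sum]
    refine Finset.sum_congr rfl fun l hl => ?_
    rw [hc l hl, basisMonomial_nil, Algebra.algebraMap_eq_smul_one]
  -- Otherwise contract `x` along a longest nonempty `l₀` in the support: this isolates `c l₀`.
  by_contra! hne
  obtain ⟨l₀, hl₀S, hmax⟩ := (c.support.filter fun l => l.val ≠ []).exists_max_image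
    (fun l => l.val.length) (by obtain ⟨l, hl, h⟩ := hne; exact ⟨l, Finset.mem_filter.2 ⟨hl, h⟩⟩)
  obtain ⟨hl₀, hl₀ne⟩ := Finset.mem_filter.1 hl₀S
  obtain ⟨a, ha, hsa⟩ := contractLeftList_basisMonomial_self w l₀.2.nodup
  have hzero : contractLeftList l₀.val (c.sum fun l a => a • basisMonomial w l.val) = 0 := by
    obtain ⟨i, t, hit⟩ := List.exists_cons_of_ne_nil hl₀ne
    rw [hit, contractLeftList, Module.End.mul_apply, hx i, map_zero]
  have hsingle : contractLeftList l₀.val (c.sum fun l a => a • basisMonomial w l.val) =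
      algebraMap K _ (c l₀ * a) := by
    rw [_root_.map_finsuppSum, Finsupp.sum,
      Finset.sum_eq_single_of_mem l₀ hl₀ fun l hl hne => ?_, map_smul, hsa, Algebra.smul_def,
      ← map_mul]
    rw [map_smul, contractLeftList_basisMonomial_of_ne w l₀.2 l.2 ?_
      (fun h => hne (Subtype.ext h)), smul_zero]
    by_cases hl' : l.val = []
    · simp [hl']
    · exact hmax l (Finset.mem_filter.2 ⟨hl, hl'⟩)
  have : c l₀ * a = 0 := (algebraMap K _).injective (by rw [← hsingle, hzero, map_zero])
  exact Finsupp.mem_support_iff.1 hl₀ ((mul_eq_zero.1 this).resolve_right ha)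

theorem exists_eq_algebraMap_of_involute_mul_ι [NeZero (2 : K)] (hw : ∀ i, w i ≠ 0)
    {x : CliffordAlgebra (weightedSumSquares K w)} (hx : ∀ v, involute x * ι _ v = ι _ v * x) :
    ∃ t : K, x = algebraMap K _ t := by
  refine exists_eq_algebraMap_of_contractLeft_proj_eq_zero w fun i => ?_
  have hpolar : polarBilin (weightedSumSquares K w) (Pi.single i 1) =
      (2 * w i) • LinearMap.proj i := by
    ext x
    simp [polar_weightedSumSquares_single]
  have := ι_mul_sub_involute_mul_ι (Pi.single i 1) x
  rw [hx, sub_self, hpolar, map_smul, LinearMap.smul_apply] at this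
  exact (smul_eq_zero.1 this.symm).resolve_left (mul_ne_zero two_ne_zero (hw i))

end Diagonal

theorem coe_eq_one_or_neg_one_of_twistedConj_ι_eq {K n : Type*} [Field K] [LinearOrder K]
    [IsStrictOrderedRing K] [Fintype n] [LinearOrder n] {w : n → K} (hw : ∀ i, w i ≠ 0)
    {l : List (n → K)}
    (hl : ∀ v ∈ l, weightedSumSquares K w v = 1 ∨ weightedSumSquares K w v = -1)
    {u : (CliffordAlgebra (weightedSumSquares K w))ˣ}
    (hu : (u : CliffordAlgebra (weightedSumSquares K w)) = (l.map (ι _)).prod)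
    (h : ∀ v, twistedConj u (ι _ v) = ι _ v) :
    (u : CliffordAlgebra (weightedSumSquares K w)) = 1 ∨
      (u : CliffordAlgebra (weightedSumSquares K w)) = -1 := by
  obtain ⟨t, ht⟩ := exists_eq_algebraMap_of_involute_mul_ι w hw (x := u) fun v => by
    conv_rhs => rw [← h v, twistedConj, Units.inv_mul_cancel_right]
  have hnorm : t * t = (l.map (weightedSumSquares K w)).prod := by
    let _ : Invertible (2 : K) := invertibleOfNonzero two_ne_zero
    refine (algebraMap K (CliffordAlgebra (weightedSumSquares K w))).injective ?_
    rw [← reverse_list_prod_ι_mul, ← hu, ht, reverse.commutes, map_mul]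
  have hprod := List.prod_eq_one_or_neg_one (l := l.map (weightedSumSquares K w))
    (by simpa using hl)
  rcases hprod with h1 | h1 <;> rw [h1] at hnorm
  · rcases mul_self_eq_one_iff.1 hnorm with rfl | rfl <;> simp [ht]
  · nlinarith [mul_self_nonneg t]

end CliffordAlgebra

lemma Brs_self_eq_neg_Qrs (r s : ℕ) (v : Fin (r + s) → ℝ) : Brs r s v v = -Qrs r s v := by
  simp only [Brs, Qrs, weightedSumSquares_apply, smul_eq_mul, ← Finset.sum_neg_distrib]
  refine Finset.sum_congr rfl fun i _ => ?_
  split_ifs <;> ring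

lemma Qrs_eq_one_or_neg_one_iff {r s : ℕ} {v : Fin (r + s) → ℝ} :
    (Qrs r s v = 1 ∨ Qrs r s v = -1) ↔ (Brs r s v v = 1 ∨ Brs r s v v = -1) := by
  rw [Brs_self_eq_neg_Qrs, neg_eq_iff_eq_neg, neg_eq_iff_eq_neg, neg_neg, or_comm]

lemma Qrs_ne_zero_of_Brs_self {r s : ℕ} {v : Fin (r + s) → ℝ}
    (hv : Brs r s v v = 1 ∨ Brs r s v v = -1) : Qrs r s v ≠ 0 := by
  rcases Qrs_eq_one_or_neg_one_iff.2 hv with h | h <;> simp [h]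

open CliffordAlgebra QuadraticForm

/-- The twisted adjoint representation restricted to `Pin(r,s)` preserves `ℝ^{r,s}`, is an
isometry (so lands in `O(r,s)`), is a group homomorphism, is surjective onto `O(r,s)`, and
has kernel `{1, -1}`: it is a double covering `Pin(r,s) → O(r,s)`. -/
theorem stmt4 (r s : ℕ) :
    (∀ u : (CliffordAlgebra (Qrs r s))ˣ, IsPin r s (u : CliffordAlgebra (Qrs r s)) →
      ∀ w : Fin (r + s) → ℝ, ∃ w' : Fin (r + s) → ℝ,
        CliffordAlgebra.involute (u : CliffordAlgebra (Qrs r s)) * CliffordAlgebra.ι (Qrs r s) w *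
            (↑u⁻¹ : CliffordAlgebra (Qrs r s)) = CliffordAlgebra.ι (Qrs r s) w' ∧
          Brs r s w' w' = Brs r s w w) ∧
    (∀ u v : (CliffordAlgebra (Qrs r s))ˣ, ∀ x : CliffordAlgebra (Qrs r s),
      CliffordAlgebra.involute ((u * v : (CliffordAlgebra (Qrs r s))ˣ) : CliffordAlgebra (Qrs r s))
          * x * (↑(u * v)⁻¹ : CliffordAlgebra (Qrs r s)) =
        CliffordAlgebra.involute (u : CliffordAlgebra (Qrs r s)) *
          (CliffordAlgebra.involute (v : CliffordAlgebra (Qrs r s)) * x *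
            (↑v⁻¹ : CliffordAlgebra (Qrs r s))) * (↑u⁻¹ : CliffordAlgebra (Qrs r s))) ∧
    (∀ C : (Fin (r + s) → ℝ) ≃ₗ[ℝ] (Fin (r + s) → ℝ),
      (∀ x y, Brs r s (C x) (C y) = Brs r s x y) →
      ∃ u : (CliffordAlgebra (Qrs r s))ˣ, IsPin r s (u : CliffordAlgebra (Qrs r s)) ∧
        ∀ w, CliffordAlgebra.involute (u : CliffordAlgebra (Qrs r s)) *
            CliffordAlgebra.ι (Qrs r s) w * (↑u⁻¹ : CliffordAlgebra (Qrs r s)) =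
          CliffordAlgebra.ι (Qrs r s) (C w)) ∧
    (∀ u : (CliffordAlgebra (Qrs r s))ˣ, IsPin r s (u : CliffordAlgebra (Qrs r s)) →
      ((∀ w, CliffordAlgebra.involute (u : CliffordAlgebra (Qrs r s)) *
          CliffordAlgebra.ι (Qrs r s) w * (↑u⁻¹ : CliffordAlgebra (Qrs r s)) =
            CliffordAlgebra.ι (Qrs r s) w) ↔
        ((u : CliffordAlgebra (Qrs r s)) = 1 ∨ (u : CliffordAlgebra (Qrs r s)) = -1))) := by
  have hw (i : Fin (r + s)) : (if (i : ℕ) < r then (-1 : ℝ) else 1) ≠ 0 := by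
    split_ifs <;> norm_num
  refine ⟨?_, twistedConj_mul, fun C hC => ?_, ?_⟩
  · rintro u ⟨l, hl, hu⟩ w
    refine ⟨_, twistedConj_ι_of_coe_eq_list_prod (fun v hv => Qrs_ne_zero_of_Brs_self (hl v hv))
      hu w, ?_⟩
    rw [Brs_self_eq_neg_Qrs, Brs_self_eq_neg_Qrs, apply_list_prod_reflection]
  · obtain ⟨l, hl, hCl⟩ := exists_list_prod_unit_reflection_eq (Q := Qrs r s)
      (separatingLeft_polarBilin_weightedSumSquares _ hw) C.toLinearMap fun x => by
        rw [← neg_inj, ← Brs_self_eq_neg_Qrs, ← Brs_self_eq_neg_Qrs, LinearEquiv.coe_coe, hC]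
    have hlBrs v (hv : v ∈ l) := Qrs_eq_one_or_neg_one_iff.1 (hl v hv)
    have hlne v (hv : v ∈ l) := Qrs_ne_zero_of_Brs_self (hlBrs v hv)
    refine ⟨(isUnit_list_prod_ι hlne).unit, ⟨l, hlBrs, rfl⟩, fun w => ?_⟩
    rw [← LinearEquiv.coe_coe, hCl]
    exact twistedConj_ι_of_coe_eq_list_prod hlne (isUnit_list_prod_ι hlne).unit_spec w
  · rintro u ⟨l, hl, hu⟩
    refine ⟨coe_eq_one_or_neg_one_of_twistedConj_ι_eq hw
      (fun v hv => Qrs_eq_one_or_neg_one_iff.2 (hl v hv)) hu, ?_⟩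
    rintro (h | h) w
    · obtain rfl : u = 1 := Units.ext h
      simp
    · obtain rfl : u = -1 := Units.ext h
      simp
end
end

section
/- Let J : Cl(r,s) → End(U) be an admissible representation (so J_zᵀ = -J_z with respect to an admissible scalar product on U) and φ = x₁⋯x_n ∈ Pin(r,s). Then for every z ∈ ℝ^{r,s}: J applied to Ad~_{φ⁻¹}(z) equals ((-1)^n / N(φ)) · J_φᵀ ∘ J_z ∘ J_φ, where J_φᵀ is the adjoint of J_φ with respect to the admissible scalar product. Equivalently, J_φᵀ J_z J_φ = J_{(-1)^n N(φ) Ad~_φᵀ(z)}. -/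
noncomputable section

/-!
Skew-adjointness of the generators `J_z` propagates multiplicatively: the adjoint of `J_a`
is `J` of the Clifford conjugate of `a`. Since `φ · α(φᵀ) = N(φ)`, the Clifford conjugate
of `φ` is `N(φ) φ⁻¹`, so `J_φᵀ J_z J_φ = N(φ) J_{φ⁻¹ z φ}`; and `α(φ⁻¹) = (-1)ⁿ φ⁻¹`
because `φ` is a product of `n` vectors.
-/

theorem LinearMap.ext_of_separatingLeft_of_symm {R U : Type*} [CommRing R] [AddCommGroup U]
    [Module R U] {B : U →ₗ[R] U →ₗ[R] R} (hsymm : ∀ x y, B x y = B y x) (hB : B.SeparatingLeft)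
    {f g : Module.End R U} (h : ∀ x y, B x (f y) = B x (g y)) : f = g := by
  ext y
  refine sub_eq_zero.mp (hB _ fun x => ?_)
  rw [hsymm, map_sub, sub_eq_zero, h]

namespace CliffordAlgebra

variable {R M U : Type*} [CommRing R] [AddCommGroup M] [Module R M] {Q : QuadraticForm R M}
  [AddCommGroup U] [Module R U]

theorem apply_left_eq_apply_right_reverse_involute (B : U →ₗ[R] U →ₗ[R] R)
    (ρ : CliffordAlgebra Q →ₐ[R] Module.End R U)
    (hρ : ∀ m x y, B (ρ (ι Q m) x) y + B x (ρ (ι Q m) y) = 0) (a : CliffordAlgebra Q) (x y : U) :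
    B (ρ a x) y = B x (ρ (reverse (involute a)) y) := by
  induction a using CliffordAlgebra.induction generalizing x y with
  | algebraMap c => simp [Algebra.algebraMap_eq_smul_one]
  | ι m => simp [eq_neg_of_add_eq_zero_left (hρ m x y)]
  | mul a b ha hb => simp [ha, hb]
  | add a b ha hb => simp [ha, hb]

theorem involute_units_inv_of_eq_prod_map_ι (u : (CliffordAlgebra Q)ˣ) (l : List M)
    (hu : (u : CliffordAlgebra Q) = (l.map (ι Q)).prod) :
    involute (↑u⁻¹ : CliffordAlgebra Q) = (-1 : R) ^ l.length • ↑u⁻¹ := by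
  have hinvol : involute (u : CliffordAlgebra Q) = (-1 : R) ^ l.length • ↑u := by
    rw [hu, involute_prod_map_ι]
  have hsign : ((-1 : R) ^ l.length) * (-1) ^ l.length = 1 := by
    rw [← mul_pow]; simp
  have hscaled : (-1 : R) ^ l.length • involute (↑u⁻¹ : CliffordAlgebra Q) = ↑u⁻¹ := by
    refine Units.eq_inv_of_mul_eq_one_left ?_
    rw [mul_smul_comm, ← smul_mul_assoc, ← hinvol, ← map_mul, u.mul_inv, map_one]
  calc involute (↑u⁻¹ : CliffordAlgebra Q)
      = ((-1 : R) ^ l.length * (-1) ^ l.length) • involute (↑u⁻¹ : CliffordAlgebra Q) := by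
        rw [hsign, one_smul]
    _ = (-1 : R) ^ l.length • ↑u⁻¹ := by rw [mul_smul, hscaled]

theorem involute_reverse_eq_smul_units_inv (u : (CliffordAlgebra Q)ˣ) {N : R}
    (hN : (u : CliffordAlgebra Q) * involute (reverse (u : CliffordAlgebra Q)) = algebraMap R _ N) :
    involute (reverse (u : CliffordAlgebra Q)) = N • ↑u⁻¹ := by
  rw [← u.inv_mul_cancel_left (involute _), hN, ← Algebra.commutes, Algebra.smul_def]

end CliffordAlgebra

theorem stmt6_general (r s : ℕ) (U : Type*) [AddCommGroup U] [Module ℝ U]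
    (BU : U →ₗ[ℝ] U →ₗ[ℝ] ℝ)
    (hsymm : ∀ x y, BU x y = BU y x)
    (hnd : ∀ x, (∀ y, BU x y = 0) → x = 0)
    (ρ : CliffordAlgebra (Qrs r s) →ₐ[ℝ] Module.End ℝ U)
    (hadm : ∀ z x y, BU (ρ (CliffordAlgebra.ι (Qrs r s) z) x) y
      + BU x (ρ (CliffordAlgebra.ι (Qrs r s) z) y) = 0)
    (u : (CliffordAlgebra (Qrs r s))ˣ) (l : List (Fin (r + s) → ℝ))
    (hu : (u : CliffordAlgebra (Qrs r s)) = (l.map (CliffordAlgebra.ι (Qrs r s))).prod)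
    (Nφ : ℝ)
    (hN : (u : CliffordAlgebra (Qrs r s)) *
        CliffordAlgebra.involute (CliffordAlgebra.reverse (u : CliffordAlgebra (Qrs r s))) =
      algebraMap ℝ (CliffordAlgebra (Qrs r s)) Nφ)
    (A' : Module.End ℝ U)
    (hA' : ∀ x y, BU (ρ (u : CliffordAlgebra (Qrs r s)) x) y = BU x (A' y)) :
    ∀ z : Fin (r + s) → ℝ,
      ρ (CliffordAlgebra.involute (↑u⁻¹ : CliffordAlgebra (Qrs r s)) *
          CliffordAlgebra.ι (Qrs r s) z * (u : CliffordAlgebra (Qrs r s))) =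
        ((-1 : ℝ) ^ l.length / Nφ) •
          (A' * ρ (CliffordAlgebra.ι (Qrs r s) z) * ρ (u : CliffordAlgebra (Qrs r s))) := by
  open CliffordAlgebra in
  intro z
  have hconj := involute_reverse_eq_smul_units_inv u hN
  have hNφ : Nφ ≠ 0 := by
    rintro rfl
    rw [zero_smul] at hconj
    exact u.ne_zero (by simpa using congrArg (fun a => reverse (involute a)) hconj)
  have hA : A' = Nφ • ρ ↑u⁻¹ := by
    refine (LinearMap.ext_of_separatingLeft_of_symm hsymm hnd fun x y => ?_).symm
    rw [← hA', apply_left_eq_apply_right_reverse_involute BU ρ hadm, reverse_involute, hconj,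
      map_smul]
  rw [involute_units_inv_of_eq_prod_map_ι u l hu, hA]
  simp only [map_mul, map_smul, smul_mul_assoc, smul_smul]
  field_simp

/-- For an admissible representation `J` and `φ = x₁⋯x_n ∈ Pin(r,s)`:
`J_{Ad~_{φ⁻¹}(z)} = ((-1)ⁿ / N(φ)) · J_φᵀ ∘ J_z ∘ J_φ`, where `J_φᵀ` is the adjoint of
`J_φ` with respect to the admissible scalar product. -/
theorem stmt6 (r s : ℕ) (U : Type*) [AddCommGroup U] [Module ℝ U]
    (BU : U →ₗ[ℝ] U →ₗ[ℝ] ℝ)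
    (hsymm : ∀ x y, BU x y = BU y x)
    (hnd : ∀ x, (∀ y, BU x y = 0) → x = 0)
    (ρ : CliffordAlgebra (Qrs r s) →ₐ[ℝ] Module.End ℝ U)
    (hadm : ∀ z x y, BU (ρ (CliffordAlgebra.ι (Qrs r s) z) x) y
      + BU x (ρ (CliffordAlgebra.ι (Qrs r s) z) y) = 0)
    (u : (CliffordAlgebra (Qrs r s))ˣ) (l : List (Fin (r + s) → ℝ))
    (hl : ∀ v ∈ l, Brs r s v v = 1 ∨ Brs r s v v = -1)
    (hu : (u : CliffordAlgebra (Qrs r s)) = (l.map (CliffordAlgebra.ι (Qrs r s))).prod)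
    (Nφ : ℝ)
    (hN : (u : CliffordAlgebra (Qrs r s)) *
        CliffordAlgebra.involute (CliffordAlgebra.reverse (u : CliffordAlgebra (Qrs r s))) =
      algebraMap ℝ (CliffordAlgebra (Qrs r s)) Nφ)
    (A' : Module.End ℝ U)
    (hA' : ∀ x y, BU (ρ (u : CliffordAlgebra (Qrs r s)) x) y = BU x (A' y)) :
    ∀ z : Fin (r + s) → ℝ,
      ρ (CliffordAlgebra.involute (↑u⁻¹ : CliffordAlgebra (Qrs r s)) *
          CliffordAlgebra.ι (Qrs r s) z * (u : CliffordAlgebra (Qrs r s))) =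
        ((-1 : ℝ) ^ l.length / Nφ) •
          (A' * ρ (CliffordAlgebra.ι (Qrs r s) z) * ρ (u : CliffordAlgebra (Qrs r s))) :=
  stmt6_general r s U BU hsymm hnd ρ hadm u l hu Nφ hN A' hA'
end
end

section
/- Let {z_i}_{i=1}^{r+s} be an orthonormal basis of ℝ^{r,s} and U an admissible Cl(r,s)-module. Suppose a linear map A : U → U satisfies Aᵀ J_{z_{k₀}} A = J_{z_{k₀}} for a single index k₀ and A J_{z_{k₀}} J_{z_l} = J_{z_{k₀}} J_{z_l} A for all l = 1,...,r+s. Then Aᵀ J_{z_l} A = J_{z_l} for every l = 1,...,r+s, i.e., A ⊕ Id is an automorphism of n_{r,s}(U). -/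
noncomputable section

/-! Since `K² = c` with `c² = 1`, we can write `L = c K (K L)`; moving `A` past `K L` and
absorbing `A' K A = K` gives `A' L A = c K K L = c² L = L`. -/

theorem conj_eq_of_conj_eq_of_commute_mul {R : Type*} [CommRing R] {M : Type*}
    [AddCommGroup M] [Module R M] {K L A A' : Module.End R M} {c : R}
    (hK : K * K = c • 1) (hc : c * c = 1) (hA : A' * K * A = K)
    (hcomm : A * (K * L) = K * L * A) :
    A' * L * A = L := by
  have hKKL : K * K * L = c • L := by rw [hK, smul_mul_assoc, one_mul]
  calc A' * L * A = c • (A' * (K * K * L) * A) := by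
        rw [hKKL, mul_smul_comm, smul_mul_assoc, smul_smul, hc, one_smul]
    _ = c • (A' * K * A * (K * L)) := by simp only [mul_assoc, hcomm]
    _ = L := by rw [hA, ← mul_assoc, hKKL, smul_smul, hc, one_smul]

theorem stmt12_general (r s : ℕ) (U : Type*) [AddCommGroup U] [Module ℝ U]
    (J : (Fin (r + s) → ℝ) →ₗ[ℝ] Module.End ℝ U)
    (hJ2 : ∀ z, J z * J z = (-(Brs r s z z)) • (1 : Module.End ℝ U))
    (zs : Fin (r + s) → (Fin (r + s) → ℝ))
    (hunit : ∀ i, Brs r s (zs i) (zs i) = 1 ∨ Brs r s (zs i) (zs i) = -1)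
    (A : U →ₗ[ℝ] U) (A' : U →ₗ[ℝ] U)
    (k₀ : Fin (r + s))
    (hk₀ : ∀ x, A' (J (zs k₀) (A x)) = J (zs k₀) x)
    (hcomm : ∀ l x, A (J (zs k₀) (J (zs l) x)) = J (zs k₀) (J (zs l) (A x))) :
    ∀ l x, A' (J (zs l) (A x)) = J (zs l) x := by
  intro l
  have hsq : -Brs r s (zs k₀) (zs k₀) * -Brs r s (zs k₀) (zs k₀) = 1 := by
    rcases hunit k₀ with h | h <;> rw [h] <;> norm_num
  exact LinearMap.ext_iff.mp <| conj_eq_of_conj_eq_of_commute_mul (hJ2 (zs k₀)) hsq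
    (LinearMap.ext hk₀) (LinearMap.ext (hcomm l))

/-- If `Aᵀ J_{z_{k₀}} A = J_{z_{k₀}}` for a single basis index `k₀` and `A` commutes with
all `J_{z_{k₀}} J_{z_l}`, then `Aᵀ J_{z_l} A = J_{z_l}` for every `l`, i.e. `A ⊕ Id` is an
automorphism of `n_{r,s}(U)`. -/
theorem stmt12 (r s : ℕ) (U : Type*) [AddCommGroup U] [Module ℝ U]
    (BU : U →ₗ[ℝ] U →ₗ[ℝ] ℝ)
    (hsymm : ∀ x y, BU x y = BU y x)
    (hnd : ∀ x, (∀ y, BU x y = 0) → x = 0)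
    (J : (Fin (r + s) → ℝ) →ₗ[ℝ] Module.End ℝ U)
    (hJ2 : ∀ z, J z * J z = (-(Brs r s z z)) • (1 : Module.End ℝ U))
    (hadm : ∀ z x y, BU (J z x) y + BU x (J z y) = 0)
    (zs : Fin (r + s) → (Fin (r + s) → ℝ))
    (horth : ∀ i j, i ≠ j → Brs r s (zs i) (zs j) = 0)
    (hunit : ∀ i, Brs r s (zs i) (zs i) = 1 ∨ Brs r s (zs i) (zs i) = -1)
    (A : U →ₗ[ℝ] U) (A' : U →ₗ[ℝ] U)
    (hA' : ∀ x y, BU (A x) y = BU x (A' y))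
    (k₀ : Fin (r + s))
    (hk₀ : ∀ x, A' (J (zs k₀) (A x)) = J (zs k₀) x)
    (hcomm : ∀ l x, A (J (zs k₀) (J (zs l) x)) = J (zs k₀) (J (zs l) (A x))) :
    ∀ l x, A' (J (zs l) (A x)) = J (zs l) x :=
  stmt12_general r s U J hJ2 zs hunit A A' k₀ hk₀ hcomm
end
end

section
/- Let U be an admissible Cl(r,s)-module with s > 0. Then the admissible scalar product on U is neutral: U has even dimension 2l and the bilinear form has signature (l,l). -/
noncomputable section

set_option maxHeartbeats 1000000 in
/-- For `s > 0`, any admissible module of `Cl_{r,s}` is neutral: it has even dimension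
`2l` and the admissible scalar product has signature `(l,l)`. -/
theorem stmt17 (r s : ℕ) (hs : 0 < s) (U : Type*) [AddCommGroup U] [Module ℝ U]
    [FiniteDimensional ℝ U]
    (BU : U →ₗ[ℝ] U →ₗ[ℝ] ℝ)
    (hsymm : ∀ x y, BU x y = BU y x)
    (hnd : ∀ x, (∀ y, BU x y = 0) → x = 0)
    (J : (Fin (r + s) → ℝ) →ₗ[ℝ] Module.End ℝ U)
    (hJ2 : ∀ z, J z * J z = (-(Brs r s z z)) • (1 : Module.End ℝ U))
    (hadm : ∀ z x y, BU (J z x) y + BU x (J z y) = 0) :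
    ∃ l : ℕ, Module.finrank ℝ U = 2 * l ∧
      ∃ b : Module.Basis (Fin (2 * l)) ℝ U,
        ∀ i j, BU (b i) (b j) =
          if i = j then (if (i : ℕ) < l then 1 else -1) else 0 := by
  classical
  set z : Fin (r + s) → ℝ := Pi.single ⟨r, by omega⟩ 1 with hz
  have hzz : Brs r s z z = -1 := by
    unfold Brs
    rw [Finset.sum_eq_single (⟨r, by omega⟩ : Fin (r + s))]
    · simp [hz]
    · intro b _ hb
      simp [hz, Pi.single_apply, hb]
    · simp
  set A : Module.End ℝ U := J z with hA
  have hA2 : ∀ x, A (A x) = x := by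
    intro x
    have h := hJ2 z
    rw [hzz] at h
    have h1 : A * A = 1 := by rw [hA, h]; norm_num
    calc A (A x) = (A * A) x := rfl
    _ = x := by rw [h1]; rfl
  have hskew : ∀ x y, BU (A x) y = - BU x (A y) := by
    intro x y; have := hadm z x y; rw [hA]; linarith
  set V := LinearMap.ker (A - 1) with hV
  set W := LinearMap.ker (A + 1) with hW
  have hmemV : ∀ x, x ∈ V ↔ A x = x := by
    intro x
    simp [hV, LinearMap.mem_ker, LinearMap.sub_apply, Module.End.one_apply, sub_eq_zero]
  have hmemW : ∀ x, x ∈ W ↔ A x = -x := by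
    intro x
    simp [hW, LinearMap.mem_ker, LinearMap.add_apply, Module.End.one_apply,
      add_eq_zero_iff_eq_neg]
  have hisoV : ∀ x ∈ V, ∀ y ∈ V, BU x y = 0 := by
    intro x hx y hy
    have h1 : BU (A x) y = - BU x (A y) := hskew x y
    rw [(hmemV x).1 hx, (hmemV y).1 hy] at h1
    linarith
  have hisoW : ∀ x ∈ W, ∀ y ∈ W, BU x y = 0 := by
    intro x hx y hy
    have h1 : BU (A x) y = - BU x (A y) := hskew x y
    rw [(hmemW x).1 hx, (hmemW y).1 hy] at h1
    simp only [map_neg, LinearMap.neg_apply, neg_neg] at h1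
    linarith
  have hdecomp : ∀ x : U, ∃ v ∈ V, ∃ w ∈ W, x = v + w := by
    intro x
    refine ⟨(1/2 : ℝ) • (x + A x), ?_, (1/2 : ℝ) • (x - A x), ?_, ?_⟩
    · rw [hmemV, map_smul, map_add, hA2 x, add_comm]
    · rw [hmemW, map_smul, map_sub, hA2 x, ← smul_neg, neg_sub]
    · module
  have hkerW : ∀ w ∈ W, (∀ v ∈ V, BU v w = 0) → w = 0 := by
    intro w hw h
    apply hnd
    intro y
    obtain ⟨v, hv, w', hw', rfl⟩ := hdecomp y
    rw [map_add, hsymm w v, h v hv, hisoW w hw w' hw', add_zero]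
  have hkerV : ∀ v ∈ V, (∀ w ∈ W, BU v w = 0) → v = 0 := by
    intro v hv h
    apply hnd
    intro y
    obtain ⟨v', hv', w, hw, rfl⟩ := hdecomp y
    rw [map_add, hisoV v hv v' hv', h w hw, add_zero]
  set φ : W →ₗ[ℝ] Module.Dual ℝ V := (BU.compl₂ V.subtype).comp W.subtype with hφdef
  have hφ : ∀ (w : W) (v : V), φ w v = BU (w : U) (v : U) := fun _ _ => rfl
  have hφinj : Function.Injective φ := by
    rw [injective_iff_map_eq_zero]
    intro w hw0
    have : (w : U) = 0 := by
      apply hkerW _ w.2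
      intro v hv
      have := DFunLike.congr_fun hw0 ⟨v, hv⟩
      rw [hφ] at this
      simp only [LinearMap.zero_apply] at this
      rw [hsymm]; exact this
    exact Subtype.ext this
  set φ' : V →ₗ[ℝ] Module.Dual ℝ W := (BU.compl₂ W.subtype).comp V.subtype with hφ'def
  have hφ' : ∀ (v : V) (w : W), φ' v w = BU (v : U) (w : U) := fun _ _ => rfl
  have hφ'inj : Function.Injective φ' := by
    rw [injective_iff_map_eq_zero]
    intro v hv0
    have : (v : U) = 0 := by
      apply hkerV _ v.2
      intro w hw
      have := DFunLike.congr_fun hv0 ⟨w, hw⟩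
      rw [hφ'] at this
      simpa using this
    exact Subtype.ext this
  have h1 : Module.finrank ℝ W ≤ Module.finrank ℝ V := by
    have := LinearMap.finrank_le_finrank_of_injective hφinj
    rwa [Subspace.dual_finrank_eq] at this
  have h2 : Module.finrank ℝ V ≤ Module.finrank ℝ W := by
    have := LinearMap.finrank_le_finrank_of_injective hφ'inj
    rwa [Subspace.dual_finrank_eq] at this
  have heq : Module.finrank ℝ V = Module.finrank ℝ W := le_antisymm h2 h1
  have hsup : V ⊔ W = ⊤ := by
    rw [Submodule.eq_top_iff']
    intro x
    obtain ⟨v, hv, w, hw, rfl⟩ := hdecomp x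
    exact Submodule.add_mem_sup hv hw
  have hinf : V ⊓ W = ⊥ := by
    rw [Submodule.eq_bot_iff]
    intro x hx
    obtain ⟨hx1, hx2⟩ := Submodule.mem_inf.1 hx
    have h3 : A x = x := (hmemV x).1 hx1
    have h4 : A x = -x := (hmemW x).1 hx2
    rw [h3] at h4
    have h5 : x + x = 0 := eq_neg_iff_add_eq_zero.mp h4
    have h6 : (2 : ℝ) • x = 0 := by rw [two_smul]; exact h5
    have := smul_eq_zero.1 h6
    simpa using this
  have hsum : Module.finrank ℝ V + Module.finrank ℝ W = Module.finrank ℝ U := by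
    have h3 := Submodule.finrank_sup_add_finrank_inf_eq V W
    rw [hsup, hinf] at h3
    simp only [finrank_top, finrank_bot, add_zero] at h3
    exact h3.symm
  set l := Module.finrank ℝ V with hl
  have hdim : Module.finrank ℝ U = 2 * l := by omega
  refine ⟨l, hdim, ?_⟩
  rcases Nat.eq_zero_or_pos l with hl0 | hlpos
  · have hzero : Module.finrank ℝ U = 0 := by omega
    haveI : Subsingleton U := Module.finrank_zero_iff.1 hzero
    haveI : IsEmpty (Fin (2 * l)) := ⟨fun k => by have := k.2; omega⟩
    exact ⟨Module.Basis.empty U, fun i => isEmptyElim i⟩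
  haveI : Nonempty (Fin (2 * l)) := ⟨⟨0, by omega⟩⟩
  set e : Module.Basis (Fin l) ℝ V := Module.finBasis ℝ V with he
  set equiv : W ≃ₗ[ℝ] Module.Dual ℝ V :=
    LinearMap.linearEquivOfInjective φ hφinj
      (by rw [Subspace.dual_finrank_eq]; exact heq.symm) with hequiv
  set f : Fin l → W := fun i => equiv.symm (e.dualBasis i) with hf
  have hef : ∀ a b, BU (e a : U) (f b : U) = if a = b then 1 else 0 := by
    intro a b
    have h0 : φ (f b) = e.dualBasis b := by
      rw [hf]
      have h0' : equiv (equiv.symm (e.dualBasis b)) = e.dualBasis b := equiv.apply_symm_apply _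
      rwa [hequiv, LinearMap.linearEquivOfInjective_apply] at h0'
    have h1 := DFunLike.congr_fun h0 (e a)
    rw [hφ, Module.Basis.dualBasis_apply_self] at h1
    rw [hsymm]
    exact h1
  have hfe : ∀ a b, BU (f a : U) (e b : U) = if a = b then 1 else 0 := by
    intro a b
    rw [hsymm, hef]
    simp [eq_comm]
  have hee : ∀ a b, BU (e a : U) (e b : U) = 0 := fun a b => hisoV _ (e a).2 _ (e b).2
  have hff : ∀ a b, BU (f a : U) (f b : U) = 0 := fun a b => hisoW _ (f a).2 _ (f b).2
  set idx : Fin (2 * l) → Fin l :=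
    fun k => if h : (k : ℕ) < l then ⟨k, h⟩ else ⟨(k : ℕ) - l, by omega⟩ with hidx
  set sgn : Fin (2 * l) → ℝ := fun k => if (k : ℕ) < l then 1 else -1 with hsgn
  set g : Fin (2 * l) → U :=
    fun k => (1/2 : ℝ) • (e (idx k) : U) + sgn k • (f (idx k) : U) with hg
  have key : ∀ i j, BU (g i) (g j) =
      (sgn j / 2 + sgn i / 2) * (if idx i = idx j then 1 else 0) := by
    intro i j
    rw [hg]
    simp only [map_add, map_smul, LinearMap.add_apply, LinearMap.smul_apply, smul_eq_mul,
      hee, hff, hef, hfe]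
    ring
  have hidxval : ∀ k : Fin (2 * l),
      ((idx k : Fin l) : ℕ) = if (k : ℕ) < l then (k : ℕ) else (k : ℕ) - l := by
    intro k
    rw [hidx]
    by_cases h : (k : ℕ) < l <;> simp [h]
  have hgram : ∀ i j, BU (g i) (g j) =
      if i = j then (if (i : ℕ) < l then 1 else -1) else 0 := by
    intro i j
    rw [key]
    by_cases hij : i = j
    · subst hij
      rw [if_pos rfl, if_pos rfl, hsgn]
      by_cases hi : (i : ℕ) < l <;> simp [hi] <;> ring
    · rw [if_neg hij]
      by_cases hx : idx i = idx j
      · rw [if_pos hx]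
        have hv := congrArg Fin.val hx
        rw [hidxval, hidxval] at hv
        have hij' : (i : ℕ) ≠ (j : ℕ) := fun h => hij (Fin.ext h)
        have hi2 := i.2
        have hj2 := j.2
        by_cases hi : (i : ℕ) < l <;> by_cases hj : (j : ℕ) < l <;>
          simp only [hi, hj, if_pos, if_neg, not_false_iff] at hv ⊢
        · omega
        · rw [hsgn]; simp [hi, hj]; ring
        · rw [hsgn]; simp [hi, hj]; ring
        · omega
      · rw [if_neg hx, mul_zero]
  have hli : LinearIndependent ℝ g := by
    apply LinearMap.BilinForm.linearIndependent_of_iIsOrtho (B := BU)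
    · rw [LinearMap.BilinForm.iIsOrtho_def]
      intro a b hab
      rw [hgram]
      simp [hab]
    · intro a
      simp only [LinearMap.BilinForm.IsOrtho, hgram, if_pos rfl]
      split_ifs <;> norm_num
  have hcard : Fintype.card (Fin (2 * l)) = Module.finrank ℝ U := by
    rw [Fintype.card_fin, hdim]
  refine ⟨basisOfLinearIndependentOfCardEqFinrank hli hcard, ?_⟩
  intro i j
  rw [coe_basisOfLinearIndependentOfCardEqFinrank hli hcard]
  exact hgram i j
end
end
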